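/- arXiv:2110.07429 — 2 statements merged into one kernel-verified Lean document; each statement's English description precedes it below -/
import Mathlib

section
/- Let k be a commutative ring, V a flat k-module, and N a left module over the tensor algebra T(V) whose underlying k-module is flat over k. Define T(V)-linear maps d : T(V) ⊗[k] V ⊗[k] N → T(V) ⊗[k] N by d(a ⊗ v ⊗ n) = (a * ι(v)) ⊗ n − a ⊗ (ι(v) • n), and μ : T(V) ⊗[k] N → N by μ(a ⊗ n) = a • n. Then 0 → T(V) ⊗[k] V ⊗[k] N → T(V) ⊗[k] N → N → 0 is a short exact sequence of left T(V)-modules: d is injective, the kernel of μ is exactly the range of d, and μ is surjective. -/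
/-!
STATEMENT 0: The Koszul resolution of a module over a tensor algebra.

For a commutative ring `k`, a flat `k`-module `V`, and a left module `N` over the
tensor algebra `T(V)` whose underlying `k`-module is flat, the sequence
`0 → T(V) ⊗[k] V ⊗[k] N → T(V) ⊗[k] N → N → 0` with maps
`d (a ⊗ v ⊗ n) = (a * ι v) ⊗ n - a ⊗ (ι v • n)` and `μ (a ⊗ n) = a • n`
is a short exact sequence of left `T(V)`-modules.
-/

open TensorProduct

namespace KoszulAux

variable (k : Type*) [CommRing k]
  (V : Type*) [AddCommGroup V] [Module k V]
  (N : Type*) [AddCommGroup N] [Module k N]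
  [Module (TensorAlgebra k V) N] [IsScalarTower k (TensorAlgebra k V) N]

/-- Left multiplication on the first factor, as a linear endomorphism. -/
noncomputable def lmul (a : TensorAlgebra k V) :
    TensorAlgebra k V ⊗[k] (V ⊗[k] N) →ₗ[k] TensorAlgebra k V ⊗[k] (V ⊗[k] N) :=
  LinearMap.rTensor (V ⊗[k] N) (LinearMap.mul k (TensorAlgebra k V) a)

lemma lmul_tmul (a b : TensorAlgebra k V) (y : V ⊗[k] N) :
    lmul k V N a (b ⊗ₜ[k] y) = (a * b) ⊗ₜ[k] y := rfl

lemma lmul_eq_smul (a : TensorAlgebra k V) (x : TensorAlgebra k V ⊗[k] (V ⊗[k] N)) :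
    lmul k V N a x = a • x := by
  induction x using TensorProduct.induction_on with
  | zero => simp [lmul]
  | tmul b y => rw [lmul_tmul, TensorProduct.smul_tmul']; rfl
  | add x y hx hy => simp [map_add, hx, hy, smul_add]

/-- The operator corresponding to `v : V` on `N × (T(V) ⊗ V ⊗ N)`. -/
noncomputable def opT (v : V) :
    (N × (TensorAlgebra k V ⊗[k] (V ⊗[k] N))) →ₗ[k]
      (N × (TensorAlgebra k V ⊗[k] (V ⊗[k] N))) :=
  LinearMap.prod
    ((Algebra.lsmul k k N (TensorAlgebra.ι k v)) ∘ₗ LinearMap.fst k _ _)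
    ((((TensorProduct.mk k (TensorAlgebra k V) (V ⊗[k] N) 1) ∘ₗ
        (TensorProduct.mk k V N v)) ∘ₗ LinearMap.fst k _ _)
      + (lmul k V N (TensorAlgebra.ι k v)) ∘ₗ LinearMap.snd k _ _)

lemma opT_apply (v : V) (n : N) (x : TensorAlgebra k V ⊗[k] (V ⊗[k] N)) :
    opT k V N v (n, x) =
      (TensorAlgebra.ι k v • n,
        (1 : TensorAlgebra k V) ⊗ₜ[k] (v ⊗ₜ[k] n) + lmul k V N (TensorAlgebra.ι k v) x) := rfl

/-- `opT` as a linear map in `v`. -/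
noncomputable def Tlin : V →ₗ[k] Module.End k (N × (TensorAlgebra k V ⊗[k] (V ⊗[k] N))) where
  toFun := opT k V N
  map_add' v w := by
    refine LinearMap.ext fun p => ?_
    obtain ⟨n, x⟩ := p
    refine Prod.ext ?_ ?_
    · simp [opT_apply, map_add, add_smul]
    · simp only [opT_apply, LinearMap.add_apply, Prod.snd_add, lmul, map_add,
        LinearMap.rTensor_add, TensorProduct.add_tmul, TensorProduct.tmul_add]
      abel
  map_smul' c v := by
    refine LinearMap.ext fun p => ?_
    obtain ⟨n, x⟩ := p
    refine Prod.ext ?_ ?_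
    · simp [opT_apply, map_smul, smul_assoc]
    · simp only [opT_apply, RingHom.id_apply, LinearMap.smul_apply, Prod.smul_snd, lmul,
        map_smul, LinearMap.rTensor_smul, smul_add]
      simp only [TensorProduct.smul_tmul, TensorProduct.tmul_smul]

/-- The algebra map `T(V) → End(N × (T(V) ⊗ V ⊗ N))`. -/
noncomputable def Phi : TensorAlgebra k V →ₐ[k]
    Module.End k (N × (TensorAlgebra k V ⊗[k] (V ⊗[k] N))) :=
  TensorAlgebra.lift k (Tlin k V N)

lemma Phi_ι (v : V) (w : N × (TensorAlgebra k V ⊗[k] (V ⊗[k] N))) :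
    Phi k V N (TensorAlgebra.ι k v) w = opT k V N v w := by
  rw [Phi, TensorAlgebra.lift_ι_apply]; rfl

lemma Phi_fst (a : TensorAlgebra k V) (w : N × (TensorAlgebra k V ⊗[k] (V ⊗[k] N))) :
    (Phi k V N a w).1 = a • w.1 := by
  induction a using TensorAlgebra.induction generalizing w with
  | algebraMap c =>
      rw [AlgHom.commutes]
      simp [Module.algebraMap_end_apply, algebraMap_smul]
  | ι v => rw [Phi_ι]; rcases w with ⟨n, x⟩; rw [opT_apply]
  | mul a b ha hb =>
      rw [map_mul]
      simp only [Module.End.mul_apply, ha, hb, mul_smul]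
  | add a b ha hb =>
      rw [map_add]
      simp only [LinearMap.add_apply, Prod.fst_add, ha, hb, add_smul]

lemma Phi_snd_zero (a : TensorAlgebra k V) (x : TensorAlgebra k V ⊗[k] (V ⊗[k] N)) :
    Phi k V N a (0, x) = (0, a • x) := by
  induction a using TensorAlgebra.induction generalizing x with
  | algebraMap c =>
      rw [AlgHom.commutes]
      simp [Module.algebraMap_end_apply, Prod.smul_mk, algebraMap_smul]
  | ι v =>
      rw [Phi_ι, opT_apply, lmul_eq_smul]
      simp
  | mul a b ha hb =>
      rw [map_mul]
      simp only [Module.End.mul_apply, ha, hb, mul_smul]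
  | add a b ha hb =>
      rw [map_add]
      simp only [LinearMap.add_apply, ha, hb, Prod.mk_add_mk, add_zero, add_smul]

/-- The contracting homotopy `s : T(V) ⊗ N → T(V) ⊗ (V ⊗ N)`. -/
noncomputable def s : TensorAlgebra k V ⊗[k] N →ₗ[k] TensorAlgebra k V ⊗[k] (V ⊗[k] N) :=
  TensorProduct.lift
    { toFun := fun a => (LinearMap.snd k _ _) ∘ₗ (Phi k V N a) ∘ₗ (LinearMap.inl k N _)
      map_add' := fun a b => by ext n; simp [map_add]
      map_smul' := fun c a => by ext n; simp [map_smul] }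

lemma s_tmul (a : TensorAlgebra k V) (n : N) :
    s k V N (a ⊗ₜ[k] n) = (Phi k V N a (n, 0)).2 := rfl

lemma Phi_apply (a : TensorAlgebra k V) (n : N) :
    Phi k V N a (n, 0) = (a • n, s k V N (a ⊗ₜ[k] n)) := by
  rw [s_tmul]
  exact Prod.ext (by rw [Phi_fst]) rfl

lemma s_mul (a b : TensorAlgebra k V) (n : N) :
    s k V N ((a * b) ⊗ₜ[k] n) = s k V N (a ⊗ₜ[k] (b • n)) + a • s k V N (b ⊗ₜ[k] n) := by
  have : Phi k V N (a * b) (n, 0) = Phi k V N a (Phi k V N b (n, 0)) := by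
    rw [map_mul]; rfl
  rw [s_tmul, this, Phi_apply]
  have hdec : ((b • n : N), s k V N (b ⊗ₜ[k] n)) =
      ((b • n : N), (0 : TensorAlgebra k V ⊗[k] (V ⊗[k] N))) + (0, s k V N (b ⊗ₜ[k] n)) := by
    simp
  rw [hdec, map_add, Phi_snd_zero, Phi_apply]
  rfl

lemma s_ι (v : V) (n : N) :
    s k V N (TensorAlgebra.ι k v ⊗ₜ[k] n) = (1 : TensorAlgebra k V) ⊗ₜ[k] (v ⊗ₜ[k] n) := by
  rw [s_tmul, Phi_ι, opT_apply]
  simp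

lemma s_algebraMap (c : k) (n : N) :
    s k V N ((algebraMap k (TensorAlgebra k V) c) ⊗ₜ[k] n) = 0 := by
  rw [s_tmul, AlgHom.commutes]
  simp [Module.algebraMap_end_apply, Prod.smul_mk]

end KoszulAux

theorem koszul_resolution_of_tensorAlgebra_shortExact
    (k : Type*) [CommRing k]
    (V : Type*) [AddCommGroup V] [Module k V] [Module.Flat k V]
    (N : Type*) [AddCommGroup N] [Module k N]
    [Module (TensorAlgebra k V) N] [IsScalarTower k (TensorAlgebra k V) N]
    [Module.Flat k N]
    (d : TensorAlgebra k V ⊗[k] (V ⊗[k] N) →ₗ[TensorAlgebra k V]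
          TensorAlgebra k V ⊗[k] N)
    (μ : TensorAlgebra k V ⊗[k] N →ₗ[TensorAlgebra k V] N)
    (hd : ∀ (a : TensorAlgebra k V) (v : V) (n : N),
      d (a ⊗ₜ[k] (v ⊗ₜ[k] n)) =
        (a * TensorAlgebra.ι k v) ⊗ₜ[k] n - a ⊗ₜ[k] ((TensorAlgebra.ι k v) • n))
    (hμ : ∀ (a : TensorAlgebra k V) (n : N), μ (a ⊗ₜ[k] n) = a • n) :
    Function.Injective d ∧ LinearMap.ker μ = LinearMap.range d ∧
      Function.Surjective μ := by
  classical
  set A := TensorAlgebra k V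
  let s := KoszulAux.s k V N
  -- s is a retraction of d
  have hsd : ∀ x, s (d x) = x := by
    intro x
    induction x using TensorProduct.induction_on with
    | zero => simp
    | tmul a y =>
        induction y using TensorProduct.induction_on with
        | zero => simp
        | tmul v n =>
            rw [hd, map_sub, KoszulAux.s_mul, KoszulAux.s_ι]
            have h1 : a • ((1 : A) ⊗ₜ[k] (v ⊗ₜ[k] n)) = a ⊗ₜ[k] (v ⊗ₜ[k] n) := by
              rw [TensorProduct.smul_tmul']
              congr 1
              simp [smul_eq_mul]
            rw [h1]
            abel
        | add y₁ y₂ h₁ h₂ =>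
            rw [TensorProduct.tmul_add, map_add, map_add, h₁, h₂]
    | add x y hx hy => rw [map_add, map_add, hx, hy]
  -- the homotopy identity : d (s z) = z - 1 ⊗ (μ z)
  have hds : ∀ (a : A) (n : N), d (s (a ⊗ₜ[k] n)) = a ⊗ₜ[k] n - (1 : A) ⊗ₜ[k] (a • n) := by
    intro a
    induction a using TensorAlgebra.induction with
    | algebraMap c =>
        intro n
        rw [KoszulAux.s_algebraMap, map_zero]
        have : (algebraMap k A c) ⊗ₜ[k] n = (1 : A) ⊗ₜ[k] ((algebraMap k A c) • n) := by
          rw [algebraMap_smul, Algebra.algebraMap_eq_smul_one, TensorProduct.smul_tmul]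
        rw [this, sub_self]
    | ι v =>
        intro n
        rw [KoszulAux.s_ι, hd, one_mul]
    | mul a b ha hb =>
        intro n
        rw [KoszulAux.s_mul, map_add, ha, map_smul, hb,
          smul_sub, mul_smul]
        have h1 : b • ((1 : A) ⊗ₜ[k] n) = b ⊗ₜ[k] n := by
          rw [TensorProduct.smul_tmul']
          congr 1
          simp [smul_eq_mul]
        have h2 : a • (b ⊗ₜ[k] n) = (a * b) ⊗ₜ[k] n := by
          rw [TensorProduct.smul_tmul']
          congr 1
        have h3 : a • ((1 : A) ⊗ₜ[k] (b • n)) = a ⊗ₜ[k] (b • n) := by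
          rw [TensorProduct.smul_tmul']
          congr 1
          simp [smul_eq_mul]
        rw [h2, h3]
        abel
    | add a b ha hb =>
        intro n
        rw [TensorProduct.add_tmul, map_add, map_add, ha, hb, add_smul, TensorProduct.tmul_add]
        abel
  refine ⟨?_, ?_, ?_⟩
  · intro x y hxy
    have := congrArg s hxy
    rwa [hsd, hsd] at this
  · ext z
    constructor
    · intro hz
      have hz0 : μ z = 0 := hz
      refine ⟨s z, ?_⟩
      have : ∀ z : A ⊗[k] N, d (s z) = z - (1 : A) ⊗ₜ[k] (μ z) := by
        intro z
        induction z using TensorProduct.induction_on with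
        | zero => simp
        | tmul a n => rw [hds, hμ]
        | add x y hx hy =>
            rw [map_add, map_add, map_add, hx, hy, TensorProduct.tmul_add]
            abel
      rw [this z, hz0, TensorProduct.tmul_zero, sub_zero]
    · rintro ⟨x, rfl⟩
      show μ (d x) = 0
      induction x using TensorProduct.induction_on with
      | zero => simp
      | tmul a y =>
          induction y using TensorProduct.induction_on with
          | zero => simp
          | tmul v n => rw [hd, map_sub, hμ, hμ, mul_smul, sub_self]
          | add y₁ y₂ h₁ h₂ => rw [TensorProduct.tmul_add, map_add, map_add, h₁, h₂, add_zero]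
      | add x y hx hy => rw [map_add, map_add, hx, hy, add_zero]
  · intro n
    exact ⟨(1 : A) ⊗ₜ[k] n, by rw [hμ, one_smul]⟩
end

section
/- Let k be a commutative ring, V any k-module, and N any left module over the tensor algebra T(V). Define the T(V)-linear maps d : T(V) ⊗[k] V ⊗[k] N → T(V) ⊗[k] N by d(a ⊗ v ⊗ n) = (a * ι(v)) ⊗ n − a ⊗ (ι(v) • n), and μ : T(V) ⊗[k] N → N by μ(a ⊗ n) = a • n. Then μ is surjective and the kernel of μ equals the range of d; that is, the sequence T(V) ⊗[k] V ⊗[k] N → T(V) ⊗[k] N → N → 0 is exact. -/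
/-!
STATEMENT 1: Right exactness of the Koszul complex of a module over a tensor algebra.

For a commutative ring `k`, any `k`-module `V`, and any left module `N` over the
tensor algebra `T(V)`, the sequence
`T(V) ⊗[k] V ⊗[k] N → T(V) ⊗[k] N → N → 0` with maps
`d (a ⊗ v ⊗ n) = (a * ι v) ⊗ n - a ⊗ (ι v • n)` and `μ (a ⊗ n) = a • n`
is exact: `μ` is surjective and `ker μ = range d`.
-/

open TensorProduct

theorem koszul_complex_of_tensorAlgebra_right_exact
    (k : Type*) [CommRing k]
    (V : Type*) [AddCommGroup V] [Module k V]
    (N : Type*) [AddCommGroup N] [Module k N]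
    [Module (TensorAlgebra k V) N] [IsScalarTower k (TensorAlgebra k V) N]
    (d : TensorAlgebra k V ⊗[k] (V ⊗[k] N) →ₗ[TensorAlgebra k V]
          TensorAlgebra k V ⊗[k] N)
    (μ : TensorAlgebra k V ⊗[k] N →ₗ[TensorAlgebra k V] N)
    (hd : ∀ (a : TensorAlgebra k V) (v : V) (n : N),
      d (a ⊗ₜ[k] (v ⊗ₜ[k] n)) =
        (a * TensorAlgebra.ι k v) ⊗ₜ[k] n - a ⊗ₜ[k] ((TensorAlgebra.ι k v) • n))
    (hμ : ∀ (a : TensorAlgebra k V) (n : N), μ (a ⊗ₜ[k] n) = a • n) :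
    Function.Surjective μ ∧ LinearMap.ker μ = LinearMap.range d := by
  constructor
  · intro n
    exact ⟨(1 : TensorAlgebra k V) ⊗ₜ[k] n, by simp [hμ]⟩
  · apply le_antisymm
    · -- ker ≤ range
      have key : ∀ (a : TensorAlgebra k V) (n : N),
          a ⊗ₜ[k] n - (1 : TensorAlgebra k V) ⊗ₜ[k] (a • n) ∈ LinearMap.range d := by
        intro a
        induction a using TensorAlgebra.induction with
        | algebraMap r =>
          intro n
          have : (algebraMap k (TensorAlgebra k V) r) ⊗ₜ[k] n
              = (1 : TensorAlgebra k V) ⊗ₜ[k] ((algebraMap k (TensorAlgebra k V) r) • n) := by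
            rw [algebraMap_smul, tmul_smul, smul_tmul', Algebra.smul_def, mul_one]
          rw [this, sub_self]
          exact Submodule.zero_mem _
        | ι v =>
          intro n
          refine ⟨(1 : TensorAlgebra k V) ⊗ₜ[k] (v ⊗ₜ[k] n), ?_⟩
          rw [hd, one_mul]
        | mul a b ha hb =>
          intro n
          have heq : (a * b) ⊗ₜ[k] n - (1 : TensorAlgebra k V) ⊗ₜ[k] ((a * b) • n)
              = a • (b ⊗ₜ[k] n - (1 : TensorAlgebra k V) ⊗ₜ[k] (b • n))
                + (a ⊗ₜ[k] (b • n) - (1 : TensorAlgebra k V) ⊗ₜ[k] (a • b • n)) := by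
            rw [smul_sub, smul_tmul', smul_tmul', smul_eq_mul, smul_eq_mul, mul_one, mul_smul]
            abel
          rw [heq]
          exact Submodule.add_mem _ (Submodule.smul_mem _ a (hb n)) (ha (b • n))
        | add a b ha hb =>
          intro n
          have heq : (a + b) ⊗ₜ[k] n - (1 : TensorAlgebra k V) ⊗ₜ[k] ((a + b) • n)
              = (a ⊗ₜ[k] n - (1 : TensorAlgebra k V) ⊗ₜ[k] (a • n))
                + (b ⊗ₜ[k] n - (1 : TensorAlgebra k V) ⊗ₜ[k] (b • n)) := by
            rw [add_tmul, add_smul, tmul_add]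
            abel
          rw [heq]
          exact Submodule.add_mem _ (ha n) (hb n)
      have main : ∀ x : TensorAlgebra k V ⊗[k] N,
          x - (1 : TensorAlgebra k V) ⊗ₜ[k] (μ x) ∈ LinearMap.range d := by
        intro x
        induction x using TensorProduct.induction_on with
        | zero => simp [Submodule.zero_mem]
        | tmul a n => rw [hμ]; exact key a n
        | add x y hx hy =>
          have heq : x + y - (1 : TensorAlgebra k V) ⊗ₜ[k] (μ (x + y))
              = (x - (1 : TensorAlgebra k V) ⊗ₜ[k] (μ x))
                + (y - (1 : TensorAlgebra k V) ⊗ₜ[k] (μ y)) := by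
            rw [map_add, tmul_add]
            abel
          rw [heq]
          exact Submodule.add_mem _ hx hy
      intro x hx
      have hx0 : μ x = 0 := hx
      have := main x
      rwa [hx0, tmul_zero, sub_zero] at this
    · -- range ≤ d
      rintro _ ⟨y, rfl⟩
      show μ (d y) = 0
      induction y using TensorProduct.induction_on with
      | zero => simp
      | tmul a vn =>
        induction vn using TensorProduct.induction_on with
        | zero => simp
        | tmul v n =>
          rw [hd, map_sub, hμ, hμ, mul_smul, sub_self]
        | add x y hx hy =>
          rw [tmul_add, map_add, map_add, hx, hy, add_zero]
      | add x y hx hy =>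
        rw [map_add, map_add, hx, hy, add_zero]
end
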